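/- arXiv:1012.5443 — 3 statements merged into one kernel-verified Lean document; each statement's English description precedes it below -/
import Mathlib

section
/- For natural numbers N, i with 0 ≤ i ≤ N, natural numbers k and q, one has C(N,i)·C(k+i,q) = Σ_{j=0}^{q} C(N,j)·C(k,q-j)·C(N-j,N-i), where C denotes the binomial coefficient. -/
open Finset

theorem Nat.choose_mul_choose_eq_choose_mul_choose_sub {N i : ℕ} (hi : i ≤ N) (j : ℕ) :
    N.choose i * i.choose j = N.choose j * (N - j).choose (N - i) := by
  by_cases hji : j ≤ i
  · rw [Nat.choose_mul hji, ← Nat.choose_symm (by omega : i - j ≤ N - j)]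
    congr 2
    omega
  · rw [Nat.choose_eq_zero_of_lt (by omega : i < j), mul_zero]
    by_cases hjN : j ≤ N
    · rw [Nat.choose_eq_zero_of_lt (by omega : N - j < N - i), mul_zero]
    · rw [Nat.choose_eq_zero_of_lt (by omega : N < j), zero_mul]

theorem stmt4 (N i k q : ℕ) (hi : i ≤ N) :
    N.choose i * (k + i).choose q =
      ∑ j ∈ Finset.range (q + 1),
        N.choose j * k.choose (q - j) * (N - j).choose (N - i) := by
  rw [add_comm k i, Nat.add_choose_eq, Nat.sum_antidiagonal_eq_sum_range_succ_mk, mul_sum]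
  refine sum_congr rfl fun j _ => ?_
  rw [← mul_assoc, Nat.choose_mul_choose_eq_choose_mul_choose_sub hi j]
  ring
end

section
/- For complex Λ, an analytic function h, N ∈ ℕ, and t = w/z, one has Σ_{i=0}^{N} C(N,i) ∂_z^i ∂_w^{N-i} (z^Λ h(w/z)) = z^{Λ-N} Σ_{j=0}^{N} C(N,j) (Λ-N+1)_j (1 - w/z)^{N-j} h^{(N-j)}(w/z). -/
/-!
Differentiating in `w` only rescales: `∂_w^(N-i) (z^Λ h(w/z)) = z^(Λ-N+i) h⁽ᴺ⁻ⁱ⁾(w/z)`.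
In `z`, each derivative of `z^ν g(w/z)` gives `ν z^(ν-1) g(w/z) + (-w) z^(ν-2) g'(w/z)`, so by
induction `∂_z^i (z^μ g(w/z)) = ∑_j C(i,j) (μ-i+1)_(i-j) (-w)^j z^(μ-i-j) g⁽ʲ⁾(w/z)`, the
coefficients obeying a Pascal-type recurrence. In the resulting double sum over `(i, j)`, put
`k = i - j` (the number of derivatives hitting the power of `z`): then `(μ-i+1)_(i-j)` becomes
`(Λ-N+1)_k`, `C(N,i) C(i,j) = C(N,k) C(N-k,j)`, and the inner sum over `j` is the binomial
expansion of `(1 - w/z)^(N-k)`.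
-/

open Complex Finset Filter Topology

lemma ascPochhammer_eval_eq_prod_range {R : Type*} [CommSemiring R] (n : ℕ) (r : R) :
    (ascPochhammer R n).eval r = ∏ m ∈ range n, (r + m) := by
  induction n with
  | zero => simp
  | succ n ih => rw [ascPochhammer_succ_eval, ih, prod_range_succ]

lemma ascPochhammer_succ_eval_left {R : Type*} [CommSemiring R] (n : ℕ) (r : R) :
    (ascPochhammer R (n + 1)).eval r = r * (ascPochhammer R n).eval (r + 1) := by
  rw [ascPochhammer_succ_left, Polynomial.eval_mul, Polynomial.eval_X, Polynomial.eval_comp,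
    Polynomial.eval_add, Polynomial.eval_X, Polynomial.eval_one]

lemma sum_range_diag_flip_add {M : Type*} [AddCommMonoid M] (n : ℕ) (f : ℕ → ℕ → M) :
    ∑ i ∈ range n, ∑ j ∈ range (i + 1), f i j =
      ∑ k ∈ range n, ∑ l ∈ range (n - k), f (k + l) l := by
  rw [← sum_range_diag_flip]
  refine sum_congr rfl fun i _ => ?_
  rw [← sum_range_reflect]
  refine sum_congr rfl fun j hj => ?_
  rw [mem_range] at hj
  rw [show i + 1 - 1 - j = i - j by omega, Nat.add_sub_cancel' (by omega : j ≤ i)]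

-- `(μ - i + 1)_(i - j) = (μ - j) ⋯ (μ - i + 1)` collects the derivatives falling on powers of `z`.
noncomputable def cpowCompDivCoeff (μ : ℂ) (i j : ℕ) : ℂ :=
  i.choose j * (ascPochhammer ℂ (i - j)).eval (μ - i + 1)

namespace cpowCompDivCoeff

variable (μ : ℂ)

lemma of_lt {i j : ℕ} (h : i < j) : cpowCompDivCoeff μ i j = 0 := by
  simp [cpowCompDivCoeff, Nat.choose_eq_zero_of_lt h]

lemma succ_zero (i : ℕ) : cpowCompDivCoeff μ (i + 1) 0 = cpowCompDivCoeff μ i 0 * (μ - i) := by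
  simp only [cpowCompDivCoeff, Nat.choose_zero_right, Nat.cast_one, one_mul, Nat.sub_zero]
  rw [show μ - (i + 1 : ℕ) + 1 = μ - i by push_cast; ring, ascPochhammer_succ_eval_left, mul_comm]

lemma succ_succ (i j : ℕ) :
    cpowCompDivCoeff μ (i + 1) (j + 1) =
      cpowCompDivCoeff μ i (j + 1) * (μ - i - (j + 1)) + cpowCompDivCoeff μ i j := by
  rcases lt_trichotomy j i with hji | rfl | hij
  · obtain ⟨k, hk⟩ := Nat.exists_eq_add_of_lt hji
    set A := (ascPochhammer ℂ k).eval (μ - i + 1)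
    have hk' : (i : ℂ) = j + k + 1 := by exact_mod_cast hk
    have left : (ascPochhammer ℂ (k + 1)).eval (μ - (i + 1 : ℕ) + 1) = (μ - i) * A := by
      rw [show μ - (i + 1 : ℕ) + 1 = μ - i by push_cast; ring, ascPochhammer_succ_eval_left]
    have right : (ascPochhammer ℂ (k + 1)).eval (μ - i + 1) = A * (μ - j) := by
      rw [ascPochhammer_succ_eval]
      congr 1
      rw [hk']
      ring
    have pascal : ((i + 1).choose (j + 1) : ℂ) = i.choose j + i.choose (j + 1) := by
      exact_mod_cast Nat.choose_succ_succ' i j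
    have absorb : (i.choose (j + 1) : ℂ) * (j + 1) = i.choose j * (k + 1) := by
      have := Nat.choose_succ_right_eq i j
      rw [show i - j = k + 1 by omega] at this
      exact_mod_cast this
    simp only [cpowCompDivCoeff, show i + 1 - (j + 1) = k + 1 by omega,
      show i - (j + 1) = k by omega, show i - j = k + 1 by omega, left, right, pascal]
    linear_combination A * absorb - (i.choose j : ℂ) * A * hk'
  · simp [cpowCompDivCoeff]
  · rw [of_lt μ (by omega : i + 1 < j + 1), of_lt μ (by omega : i < j + 1), of_lt μ hij]
    ring

lemma add_natCast (ν : ℂ) (k l : ℕ) :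
    cpowCompDivCoeff (ν + (k + l : ℕ)) (k + l) l =
      (k + l).choose l * (ascPochhammer ℂ k).eval (ν + 1) := by
  rw [cpowCompDivCoeff, Nat.add_sub_cancel, add_sub_cancel_right]

end cpowCompDivCoeff

theorem iteratedDeriv_comp_div_const {𝕜 : Type*} [NontriviallyNormedField 𝕜] {n : ℕ}
    {g : 𝕜 → 𝕜} (hg : ContDiff 𝕜 n g) (c x : 𝕜) :
    iteratedDeriv n (fun x => g (x / c)) x = iteratedDeriv n g (x / c) / c ^ n := by
  simp_rw [div_eq_mul_inv, mul_comm _ c⁻¹, iteratedDeriv_comp_const_mul hg c⁻¹, inv_pow]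
  ring

lemma Differentiable.iteratedDeriv {g : ℂ → ℂ} (hg : Differentiable ℂ g) (n : ℕ) :
    Differentiable ℂ (iteratedDeriv n g) :=
  (hg.contDiff (n := ⊤)).differentiable_iteratedDeriv n (WithTop.coe_lt_top _)

theorem iteratedDeriv_cpow_mul_comp_div_const {g : ℂ → ℂ} (hg : Differentiable ℂ g) (μ : ℂ)
    (n : ℕ) {z : ℂ} (hz : z ≠ 0) (w : ℂ) :
    iteratedDeriv n (fun w => z ^ μ * g (w / z)) w = z ^ (μ - n) * iteratedDeriv n g (w / z) := by
  rw [iteratedDeriv_const_mul_field, iteratedDeriv_comp_div_const hg.contDiff, cpow_sub _ _ hz,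
    cpow_natCast]
  ring

theorem hasDerivAt_cpow_mul_comp_const_div {g : ℂ → ℂ} {g' ν w z : ℂ}
    (hg : HasDerivAt g g' (w / z)) (hz : z ∈ slitPlane) :
    HasDerivAt (fun z => z ^ ν * g (w / z))
      (ν * z ^ (ν - 1) * g (w / z) - w * (z ^ (ν - 2) * g')) z := by
  have hz0 := slitPlane_ne_zero hz
  have hdiv : HasDerivAt (fun z => w / z) (-w / z ^ 2) z := by
    simpa [div_eq_mul_inv] using (hasDerivAt_inv hz0).const_mul w
  refine ((hasStrictDerivAt_cpow_const hz).hasDerivAt.mul (hg.comp z hdiv)).congr_deriv ?_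
  rw [Function.comp_apply, cpow_sub _ _ hz0, cpow_sub _ _ hz0, cpow_one, cpow_ofNat]
  field_simp
  ring

theorem iteratedDeriv_cpow_mul_comp_const_div {g : ℂ → ℂ} (hg : Differentiable ℂ g) (μ w : ℂ)
    (i : ℕ) {z : ℂ} (hz : z ∈ slitPlane) :
    iteratedDeriv i (fun z => z ^ μ * g (w / z)) z =
      ∑ j ∈ range (i + 1),
        cpowCompDivCoeff μ i j * (-w) ^ j * z ^ (μ - i - j) * iteratedDeriv j g (w / z) := by
  induction i generalizing z with
  | zero => simp [cpowCompDivCoeff]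
  | succ i ih =>
    set T : ℕ → ℂ := fun j => (-w) ^ j * (z ^ (μ - (i + 1 : ℕ) - j) * iteratedDeriv j g (w / z))
    have hterm : ∀ j ∈ range (i + 1), HasDerivAt
        (fun z => cpowCompDivCoeff μ i j * (-w) ^ j * (z ^ (μ - i - j) * iteratedDeriv j g (w / z)))
        (cpowCompDivCoeff μ i j * (μ - i - j) * T j + cpowCompDivCoeff μ i j * T (j + 1)) z := by
      intro j _
      have hgj : HasDerivAt (iteratedDeriv j g) (iteratedDeriv (j + 1) g (w / z)) (w / z) := by
        rw [iteratedDeriv_succ]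
        exact (hg.iteratedDeriv j _).hasDerivAt
      refine ((hasDerivAt_cpow_mul_comp_const_div hgj hz).const_mul _).congr_deriv ?_
      simp only [T]
      rw [show μ - i - j - 1 = μ - (i + 1 : ℕ) - j by push_cast; ring,
        show μ - i - j - 2 = μ - (i + 1 : ℕ) - (j + 1 : ℕ) by push_cast; ring]
      ring
    have hev : iteratedDeriv i (fun z => z ^ μ * g (w / z)) =ᶠ[𝓝 z] fun z => ∑ j ∈ range (i + 1),
        cpowCompDivCoeff μ i j * (-w) ^ j * (z ^ (μ - i - j) * iteratedDeriv j g (w / z)) := by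
      filter_upwards [isOpen_slitPlane.mem_nhds hz] with x hx
      simp only [ih hx, mul_assoc]
    rw [iteratedDeriv_succ, hev.deriv_eq, (HasDerivAt.fun_sum hterm).deriv, sum_add_distrib]
    calc _ = ∑ j ∈ range (i + 1 + 1), cpowCompDivCoeff μ (i + 1) j * T j := by
          rw [sum_range_succ' _ (i + 1), sum_range_succ' (fun j => _ * T j) i]
          simp only [cpowCompDivCoeff.succ_succ, cpowCompDivCoeff.succ_zero, add_mul,
            sum_add_distrib]
          rw [sum_range_succ (fun j => cpowCompDivCoeff μ i (j + 1) * _ * T (j + 1)) i,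
            cpowCompDivCoeff.of_lt μ (Nat.lt_succ_self i)]
          push_cast
          ring
      _ = _ := sum_congr rfl fun j _ => by simp only [T]; ring

theorem iteratedDeriv_iteratedDeriv_cpow_mul_comp_const_div {g : ℂ → ℂ} (hg : Differentiable ℂ g)
    (μ w : ℂ) (i n : ℕ) {z : ℂ} (hz : z ∈ slitPlane) :
    iteratedDeriv i (fun z => iteratedDeriv n (fun w => z ^ μ * g (w / z)) w) z =
      ∑ j ∈ range (i + 1), cpowCompDivCoeff (μ - n) i j * (-w) ^ j * z ^ (μ - n - i - j) *
        iteratedDeriv (j + n) g (w / z) := by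
  have hev : (fun z => iteratedDeriv n (fun w => z ^ μ * g (w / z)) w) =ᶠ[𝓝 z]
      fun z => z ^ (μ - n) * iteratedDeriv n g (w / z) := by
    filter_upwards [isOpen_slitPlane.mem_nhds hz] with x hx
    exact iteratedDeriv_cpow_mul_comp_div_const hg μ n (slitPlane_ne_zero hx) w
  rw [hev.iteratedDeriv_eq,
    iteratedDeriv_cpow_mul_comp_const_div (hg.iteratedDeriv n) (μ - n) w i hz]
  simp only [iteratedDeriv_eq_iterate, ← Function.iterate_add_apply]

theorem stmt9 (Λ : ℂ) (h : ℂ → ℂ) (hh : AnalyticOn ℂ h Set.univ)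
    (N : ℕ) (z w : ℂ) (hz : z ∈ Complex.slitPlane) :
    (∑ i ∈ Finset.range (N + 1), (N.choose i : ℂ) *
        iteratedDeriv i
          (fun z : ℂ => iteratedDeriv (N - i) (fun w : ℂ => z ^ Λ * h (w / z)) w) z) =
      z ^ (Λ - N) * ∑ j ∈ Finset.range (N + 1), (N.choose j : ℂ) *
        (∏ m ∈ Finset.range j, (Λ - N + 1 + m)) *
        (1 - w / z) ^ (N - j) * iteratedDeriv (N - j) h (w / z) := by
  have hd : Differentiable ℂ h := differentiableOn_univ.mp hh.differentiableOn
  simp only [iteratedDeriv_iteratedDeriv_cpow_mul_comp_const_div hd _ _ _ _ hz, mul_sum]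
  rw [sum_range_diag_flip_add]
  refine sum_congr rfl fun k hk => ?_
  rw [mem_range] at hk
  have binomial : (1 - w / z) ^ (N - k) =
      ∑ l ∈ range (N - k + 1), ((N - k).choose l : ℂ) * (-(w / z)) ^ l := by
    rw [sub_eq_neg_add, add_pow]
    exact sum_congr rfl fun l _ => by rw [one_pow]; ring
  rw [binomial, show N + 1 - k = N - k + 1 by omega, mul_sum, sum_mul, mul_sum]
  refine sum_congr rfl fun l hl => ?_
  have hkl : k + l ≤ N := by rw [mem_range] at hl; omega
  have hchoose : (N.choose (k + l) : ℂ) * (k + l).choose l = N.choose k * (N - k).choose l := by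
    rw [← Nat.choose_symm_add]
    exact_mod_cast (Nat.choose_mul (Nat.le_add_right k l)).trans (by rw [Nat.add_sub_cancel_left])
  have hexp : Λ - ↑(N - (k + l)) = Λ - N + ↑(k + l) := by push_cast [Nat.cast_sub hkl]; ring
  rw [hexp, show l + (N - (k + l)) = N - k by omega, cpowCompDivCoeff.add_natCast,
    ← ascPochhammer_eval_eq_prod_range, show Λ - N + ↑(k + l) - ↑(k + l) - l = Λ - N - l by ring,
    cpow_sub _ _ (slitPlane_ne_zero hz), cpow_natCast, ← neg_div, div_pow]
  linear_combination (ascPochhammer ℂ k).eval (Λ - N + 1) * (-w) ^ l * (z ^ (Λ - N) / z ^ l) *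
    iteratedDeriv (N - k) h (w / z) * hchoose
end

section
/- Let X(λ,μ,ν) = (C(λ,ℓ)·C(μ,ℓ)/C((λ+μ+ν+2)/2, ℓ)) · ∏_{j=ν+2}^{(λ+μ+ν+2)/2} 1/(j² - κ²), where ℓ = (λ+μ-ν)/2, defined whenever λ+μ+ν is even and 0 ≤ ℓ ≤ min(λ,μ). With X(1,n+1,n) = (n+1)/(n+2) · 1/((n+2)² - κ²), the constants X satisfy the recursion X(λ+1,μ,ν) = -((λ+1)(λ-μ-ν-1)/((ν+1)(λ+μ-ν+1))) · X(1,ν+1,ν) · X(λ,μ,ν+1), whenever both sides are defined (i.e., λ+1+μ+ν even, |λ+1-μ| ≤ ν ≤ λ+1+μ, and ν+1 ≤ λ+μ). -/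
/-! Write `l + μ = ν + 1 + 2m`. Then `ℓ = m + 1` for `X(l+1, μ, ν)` and `ℓ = m` for
`X(l, μ, ν+1)`, and both products run up to `j = ν + m + 2`; they differ only by the factor
`1/((ν+2)² - κ²)`, which is the product in `X(1, ν+1, ν)`. The binomial prefactors differ by
`(l+1)(μ-m) / ((m+1)(ν+2))`, which is what the rational coefficient and the prefactor
`(ν+1)/(ν+2)` of `X(1, ν+1, ν)` supply together. -/

/-- The structure constants `X_{λ,μ}^ν` of the VOA of rank 26. -/
noncomputable def structX (κ : ℂ) (l μ ν : ℕ) : ℂ :=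
  if (l + μ + ν) % 2 = 0 ∧ ν ≤ l + μ ∧ μ ≤ l + ν ∧ l ≤ μ + ν then
    ((l.choose ((l + μ - ν) / 2) : ℂ) * (μ.choose ((l + μ - ν) / 2) : ℂ) /
        (((l + μ + ν + 2) / 2).choose ((l + μ - ν) / 2) : ℂ)) *
      ∏ j ∈ Finset.Icc (ν + 2) ((l + μ + ν + 2) / 2), ((j : ℂ) ^ 2 - κ ^ 2)⁻¹
  else 0

theorem Nat.cast_choose_succ_right {K : Type*} [DivisionRing K] [CharZero K] (n k : ℕ) :
    (n.choose (k + 1) : K) = n.choose k * (n - k : ℕ) / (k + 1) := by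
  rw [eq_div_iff k.cast_add_one_ne_zero]
  exact_mod_cast n.choose_succ_right_eq k

theorem Nat.cast_choose_succ_succ {K : Type*} [DivisionRing K] [CharZero K] (n k : ℕ) :
    ((n + 1).choose (k + 1) : K) = (n + 1) * n.choose k / (k + 1) := by
  rw [eq_div_iff k.cast_add_one_ne_zero]
  exact_mod_cast (n.add_one_mul_choose_eq k).symm

theorem cast_choose_mul_choose_div_choose_succ {K : Type*} [Field K] [CharZero K] (l μ n k : ℕ) :
    ((l + 1).choose (k + 1) * μ.choose (k + 1) / n.choose (k + 1) : K) =
      (l + 1) * (μ - k : ℕ) / ((k + 1) * (n - k : ℕ)) *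
        (l.choose k * μ.choose k / n.choose k) := by
  have hk : (k + 1 : K) ≠ 0 := k.cast_add_one_ne_zero
  rw [Nat.cast_choose_succ_succ, Nat.cast_choose_succ_right, Nat.cast_choose_succ_right]
  simp only [div_eq_mul_inv, mul_inv, inv_inv]
  calc _ = (l + 1) * ((μ - k : ℕ) : K) * ((k + 1 : K)⁻¹ * ((n - k : ℕ) : K)⁻¹) *
        (l.choose k * μ.choose k * (n.choose k : K)⁻¹) * ((k + 1) * (k + 1 : K)⁻¹) := by ring
    _ = _ := by rw [mul_inv_cancel₀ hk, mul_one]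

theorem structX_eq_of_add_eq (κ : ℂ) {l μ ν k : ℕ} (hk : l + μ = ν + 2 * k) (hkl : k ≤ l)
    (hkμ : k ≤ μ) :
    structX κ l μ ν = (l.choose k * μ.choose k / (ν + k + 1).choose k : ℂ) *
      ∏ j ∈ Finset.Icc (ν + 2) (ν + k + 1), ((j : ℂ) ^ 2 - κ ^ 2)⁻¹ := by
  rw [structX, if_pos (by omega), show (l + μ - ν) / 2 = k by omega,
    show (l + μ + ν + 2) / 2 = ν + k + 1 by omega]

theorem structX_one_succ (κ : ℂ) (ν : ℕ) :
    structX κ 1 (ν + 1) ν =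
      (ν + 1) / (ν + 2) * (((ν + 2 : ℕ) : ℂ) ^ 2 - κ ^ 2)⁻¹ := by
  rw [structX_eq_of_add_eq κ (k := 1) (by omega) le_rfl (by omega)]
  simp only [Nat.choose_self, Nat.choose_one_right, Finset.Icc_self, Finset.prod_singleton]
  push_cast
  ring

theorem stmt15_general (κ : ℂ) (l μ ν : ℕ)
    (hpar : (l + 1 + μ + ν) % 2 = 0)
    (h2 : l + 1 ≤ μ + ν) (h3 : μ ≤ l + 1 + ν) (h4 : ν + 1 ≤ l + μ) :
    structX κ (l + 1) μ ν =
      -(((l : ℂ) + 1) * ((l : ℂ) - μ - ν - 1) /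
          (((ν : ℂ) + 1) * ((l : ℂ) + μ - ν + 1))) *
        structX κ 1 (ν + 1) ν * structX κ l μ (ν + 1) := by
  obtain ⟨m, hm⟩ : ∃ m, l + μ = ν + 1 + 2 * m := ⟨(l + μ - ν - 1) / 2, by omega⟩
  rw [structX_one_succ, structX_eq_of_add_eq κ (k := m + 1) (by omega) (by omega) (by omega),
    structX_eq_of_add_eq κ (l := l) (k := m) (by omega) (by omega) (by omega),
    ← Finset.mul_prod_Ioc_eq_prod_Icc (by omega), ← Finset.Icc_add_one_left_eq_Ioc,
    show ν + (m + 1) + 1 = ν + 1 + m + 1 by omega, cast_choose_mul_choose_div_choose_succ,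
    show ν + 1 + m + 1 - m = ν + 2 by omega, Nat.cast_sub (by omega : m ≤ μ)]
  have hm' : (l : ℂ) + μ = ν + 1 + 2 * m := by exact_mod_cast hm
  have hν1 : (ν + 1 : ℂ) ≠ 0 := ν.cast_add_one_ne_zero
  have hν2 : (ν + 2 : ℂ) ≠ 0 := by exact_mod_cast (ν + 1).succ_ne_zero
  have hm1 : (m + 1 : ℂ) ≠ 0 := m.cast_add_one_ne_zero
  rw [show (l : ℂ) - μ - ν - 1 = -2 * (μ - m) by linear_combination hm',
    show (l : ℂ) + μ - ν + 1 = 2 * (m + 1) by linear_combination hm']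
  generalize ∏ j ∈ Finset.Icc (ν + 1 + 2) (ν + 1 + m + 1), ((j : ℂ) ^ 2 - κ ^ 2)⁻¹ = P
  generalize (((ν + 2 : ℕ) : ℂ) ^ 2 - κ ^ 2)⁻¹ = q
  push_cast
  field_simp

theorem stmt15 (κ : ℂ) (hκ : ∀ q : ℚ, (q : ℂ) ≠ κ) (l μ ν : ℕ)
    (hpar : (l + 1 + μ + ν) % 2 = 0) (h1 : ν ≤ l + 1 + μ)
    (h2 : l + 1 ≤ μ + ν) (h3 : μ ≤ l + 1 + ν) (h4 : ν + 1 ≤ l + μ) :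
    structX κ (l + 1) μ ν =
      -(((l : ℂ) + 1) * ((l : ℂ) - μ - ν - 1) /
          (((ν : ℂ) + 1) * ((l : ℂ) + μ - ν + 1))) *
        structX κ 1 (ν + 1) ν * structX κ l μ (ν + 1) :=
  stmt15_general κ l μ ν hpar h2 h3 h4
end
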